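/- arXiv:0909.5007 — 7 statements merged into one kernel-verified Lean document; each statement's English description precedes it below -/
import Mathlib

section
/- Let s_1, …, s_M be binary sequences of common period P that are consecutively 3-wise shift-invariant, with duty factors f_1, …, f_M; set s_j := 0 and f_j := 0 for every index j outside {1,…,M}. Then for every i ∈ {1,…,M} and all shifts τ_{i−2}, τ_{i−1}, τ_i, τ_{i+1}, τ_{i+2} ∈ ZMod P, the forward throughput satisfies Σ_{k ∈ ZMod P} s_i(k−τ_i)·(1−s_{i+1}(k−τ_{i+1}))·(1−s_{i+2}(k−τ_{i+2})) = P·f_i·(1−f_{i+1})·(1−f_{i+2}), and the backward throughput satisfies Σ_{k ∈ ZMod P} s_i(k−τ_i)·(1−s_{i−1}(k−τ_{i−1}))·(1−s_{i−2}(k−τ_{i−2})) = P·f_i·(1−f_{i−1})·(1−f_{i−2}). -/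
/-!
If the correlation of a family of sequences does not depend on the shifts, averaging it over
all `P` shifts of one member factors that member out, leaving its sum `P f`; by induction the
correlation of any set of consecutive sequences is `P ∏ f`. Expanding
`s_i (1 - s_{i±1}) (1 - s_{i±2})` into such correlations gives
`P f_i (1 - f_{i±1}) (1 - f_{i±2})`.
-/

open Finset

variable {ι G : Type*} [AddCommGroup G] [Fintype G]

def crossCorrelation (s : ι → G → ℝ) (A : Finset ι) (τ : ι → G) : ℝ :=
  ∑ k, ∏ j ∈ A, s j (k - τ j)

def IsShiftInvariant (s : ι → G → ℝ) (A : Finset ι) : Prop :=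
  ∀ τ τ' : ι → G, crossCorrelation s A τ = crossCorrelation s A τ'

theorem crossCorrelation_empty (s : ι → G → ℝ) (τ : ι → G) :
    crossCorrelation s ∅ τ = Fintype.card G := by
  simp [crossCorrelation]

variable [DecidableEq ι] {s : ι → G → ℝ}

/-- Averaging over the shift of the new sequence `s a` splits it off the correlation. -/
theorem card_mul_crossCorrelation_insert {a : ι} {B : Finset ι} (ha : a ∉ B)
    (hinv : IsShiftInvariant s (insert a B)) (τ : ι → G) :
    Fintype.card G * crossCorrelation s (insert a B) τ
      = crossCorrelation s B τ * ∑ k, s a k := by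
  have hB : ∀ σ k,
      ∏ j ∈ B, s j (k - Function.update τ a σ j) = ∏ j ∈ B, s j (k - τ j) :=
    fun σ k => prod_congr rfl fun j hj => by
      rw [Function.update_of_ne (ne_of_mem_of_not_mem hj ha)]
  have hshift : ∀ k, ∑ σ, s a (k - σ) = ∑ k, s a k := fun k =>
    (Equiv.subLeft k).sum_comp (s a)
  calc Fintype.card G * crossCorrelation s (insert a B) τ
      = ∑ σ, crossCorrelation s (insert a B) (Function.update τ a σ) := by
        simp [fun σ => hinv (Function.update τ a σ) τ]
    _ = ∑ k, (∏ j ∈ B, s j (k - τ j)) * ∑ σ, s a (k - σ) := by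
        simp only [crossCorrelation, prod_insert ha, Function.update_self, hB, mul_sum]
        rw [sum_comm]
        exact sum_congr rfl fun _ _ => sum_congr rfl fun _ _ => mul_comm _ _
    _ = crossCorrelation s B τ * ∑ k, s a k := by
        simp only [hshift, crossCorrelation, sum_mul]

theorem crossCorrelation_eq_card_mul_prod {A : Finset ι} {f : ι → ℝ}
    (hf : ∀ j ∈ A, ∑ k, s j k = Fintype.card G * f j)
    (hinv : ∀ B ⊆ A, IsShiftInvariant s B) (τ : ι → G) :
    crossCorrelation s A τ = Fintype.card G * ∏ j ∈ A, f j := by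
  induction A using Finset.induction_on with
  | empty => simp [crossCorrelation_empty]
  | insert a B ha ih =>
    have hcard : (Fintype.card G : ℝ) ≠ 0 := Nat.cast_ne_zero.mpr Fintype.card_ne_zero
    apply mul_left_cancel₀ hcard
    rw [card_mul_crossCorrelation_insert ha (hinv _ subset_rfl),
      ih (fun j hj => hf j (mem_insert_of_mem hj))
        (fun C hC => hinv C (hC.trans (subset_insert a B))),
      hf a (mem_insert_self a B), prod_insert ha]
    ring

theorem sum_prod_mul_prod_one_sub {A B : Finset ι} (hAB : Disjoint A B) {f : ι → ℝ}
    (hf : ∀ j ∈ A ∪ B, ∑ k, s j k = Fintype.card G * f j)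
    (hinv : ∀ C ⊆ A ∪ B, IsShiftInvariant s C) (τ : ι → G) :
    ∑ k, (∏ j ∈ A, s j (k - τ j)) * ∏ j ∈ B, (1 - s j (k - τ j))
      = Fintype.card G * (∏ j ∈ A, f j) * ∏ j ∈ B, (1 - f j) := by
  induction B using Finset.induction_on generalizing A with
  | empty =>
    simpa [crossCorrelation] using
      crossCorrelation_eq_card_mul_prod (by simpa using hf) (by simpa using hinv) τ
  | insert b B hb ih =>
    rw [disjoint_insert_right] at hAB
    have hunion : insert b A ∪ B = A ∪ insert b B := by
      rw [insert_union, union_insert]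
    have hsplit : ∀ k, (∏ j ∈ A, s j (k - τ j)) * ∏ j ∈ insert b B, (1 - s j (k - τ j))
        = (∏ j ∈ A, s j (k - τ j)) * ∏ j ∈ B, (1 - s j (k - τ j))
          - (∏ j ∈ insert b A, s j (k - τ j)) * ∏ j ∈ B, (1 - s j (k - τ j)) := by
      intro k
      rw [prod_insert hb, prod_insert hAB.1]
      ring
    have hsub : A ∪ B ⊆ A ∪ insert b B := union_subset_union_right (subset_insert b B)
    rw [sum_congr rfl fun k _ => hsplit k, sum_sub_distrib,
      ih hAB.2 (fun j hj => hf j (hsub hj)) (fun C hC => hinv C (hC.trans hsub)),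
      ih (disjoint_insert_left.mpr ⟨hb, hAB.2⟩) (hunion ▸ hf) (hunion ▸ hinv),
      prod_insert hb, prod_insert hAB.1]
    ring

def IsConsecutively3WiseShiftInvariant (M : ℕ) (s : ℕ → G → ℝ) : Prop :=
  ∀ i ∈ Icc 1 M, ∀ A ⊆ Icc i (i + 2) ∩ Icc 1 M, A.Nonempty → IsShiftInvariant s A

section Window

variable {M : ℕ} {s : ℕ → G → ℝ}

/-- Shift invariance extends to every window of three consecutive indices, because a
sequence with an index outside `1, …, M` is zero. -/
theorem IsConsecutively3WiseShiftInvariant.isShiftInvariant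
    (hSI : IsConsecutively3WiseShiftInvariant M s)
    (hzero : ∀ j, j ∉ Icc 1 M → ∀ k, s j k = 0) {A : Finset ℕ} {m : ℕ}
    (hA : A ⊆ Icc m (m + 2)) : IsShiftInvariant s A := by
  by_cases hAM : A ⊆ Icc 1 M
  · rcases A.eq_empty_or_nonempty with rfl | hne
    · intro τ τ'
      rw [crossCorrelation_empty, crossCorrelation_empty]
    · have hmin := A.min'_mem hne
      refine hSI _ (hAM hmin) A (fun j hj => ?_) hne
      have hj' := mem_Icc.mp (hA hj)
      have hmin' := mem_Icc.mp (hA hmin)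
      exact mem_inter.mpr ⟨mem_Icc.mpr ⟨A.min'_le j hj, by omega⟩, hAM hj⟩
  · obtain ⟨j, hjA, hjM⟩ := not_subset.mp hAM
    have hvanish : ∀ τ : ℕ → G, crossCorrelation s A τ = 0 := fun τ =>
      sum_eq_zero fun k _ => prod_eq_zero hjA (hzero j hjM _)
    intro τ τ'
    rw [hvanish, hvanish]

theorem IsConsecutively3WiseShiftInvariant.sum_mul_one_sub_mul_one_sub
    (hSI : IsConsecutively3WiseShiftInvariant M s)
    (hzero : ∀ j, j ∉ Icc 1 M → ∀ k, s j k = 0)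
    {f : ℕ → ℝ} (hf : ∀ j, ∑ k, s j k = Fintype.card G * f j) {a b c m : ℕ}
    (hab : a ≠ b) (hac : a ≠ c) (hbc : b ≠ c) (hwin : {a, b, c} ⊆ Icc m (m + 2))
    (τ : ℕ → G) :
    ∑ k, s a (k - τ a) * (1 - s b (k - τ b)) * (1 - s c (k - τ c))
      = Fintype.card G * f a * (1 - f b) * (1 - f c) := by
  have hAB : Disjoint ({a} : Finset ℕ) {b, c} := by simp [hab, hac]
  simpa [prod_pair hbc, mul_assoc] using
    sum_prod_mul_prod_one_sub hAB (fun j _ => hf j)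
      (fun C hC => hSI.isShiftInvariant hzero (hC.trans hwin)) τ

end Window

theorem throughput_of_shift_invariant_general (P M : ℕ) [NeZero P]
    (s : ℕ → ZMod P → ℝ) (f : ℕ → ℝ)
    (hzero : ∀ j, j ∉ Finset.Icc 1 M → (∀ k, s j k = 0))
    (hduty : ∀ j, f j = (1 / (P : ℝ)) * ∑ k : ZMod P, s j k)
    (hSI : ∀ i ∈ Finset.Icc 1 M,
      ∀ A ⊆ Finset.Icc i (i + 2) ∩ Finset.Icc 1 M, A.Nonempty →
        ∀ τ τ' : ℕ → ZMod P,
          ∑ k : ZMod P, ∏ j ∈ A, s j (k - τ j)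
            = ∑ k : ZMod P, ∏ j ∈ A, s j (k - τ' j)) :
    ∀ i ∈ Finset.Icc 1 M, ∀ τ : ℕ → ZMod P,
      (∑ k : ZMod P,
          s i (k - τ i) * (1 - s (i + 1) (k - τ (i + 1))) * (1 - s (i + 2) (k - τ (i + 2)))
        = (P : ℝ) * f i * (1 - f (i + 1)) * (1 - f (i + 2))) ∧
      (∑ k : ZMod P,
          s i (k - τ i) * (1 - s (i - 1) (k - τ (i - 1))) * (1 - s (i - 2) (k - τ (i - 2)))
        = (P : ℝ) * f i * (1 - f (i - 1)) * (1 - f (i - 2))) := by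
  intro i hi τ
  have hSI' : IsConsecutively3WiseShiftInvariant M s := hSI
  have hf : ∀ j, ∑ k, s j k = Fintype.card (ZMod P) * f j := fun j => by
    rw [ZMod.card, hduty, one_div, mul_inv_cancel_left₀ (Nat.cast_ne_zero.mpr (NeZero.ne P))]
  have hwin : ∀ {a b c m : ℕ},
      m ≤ a ∧ a ≤ m + 2 → m ≤ b ∧ b ≤ m + 2 → m ≤ c ∧ c ≤ m + 2 →
      {a, b, c} ⊆ Icc m (m + 2) := fun ha hb hc => by
    simpa only [insert_subset_iff, singleton_subset_iff, mem_Icc] using ⟨ha, hb, hc⟩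
  have hi1 := (mem_Icc.mp hi).1
  constructor
  · simpa using hSI'.sum_mul_one_sub_mul_one_sub hzero hf (a := i) (b := i + 1) (c := i + 2)
      (by omega) (by omega) (by omega) (hwin (m := i) (by omega) (by omega) (by omega)) τ
  obtain rfl | hi2 : i = 1 ∨ 2 ≤ i := by omega
  -- for `i = 1` both `i - 1` and `i - 2` truncate to the vanishing index `0`
  · have hs0 := hzero 0 (by simp)
    have hf0 : f 0 = 0 := by simpa [hs0] using hduty 0
    simpa [hs0, hf0, crossCorrelation] using
      crossCorrelation_eq_card_mul_prod (A := {1}) (fun j _ => hf j)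
        (fun C hC => hSI'.isShiftInvariant hzero (m := 1) (hC.trans (by simp))) τ
  · simpa using hSI'.sum_mul_one_sub_mul_one_sub hzero hf (a := i) (b := i - 1) (c := i - 2)
      (by omega) (by omega) (by omega) (hwin (m := i - 2) (by omega) (by omega) (by omega)) τ

/-- **Lemma 1.** If consecutively 3-wise shift-invariant protocol sequences (binary
sequences of common period `P`, extended by zero outside indices `1,…,M`) are used, then
for every node `i ∈ {1,…,M}` and all delay offsets, the forward throughput from node `i`
to node `i+1` equals `P·f_i·(1−f_{i+1})·(1−f_{i+2})` and the backward throughput from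
node `i` to node `i−1` equals `P·f_i·(1−f_{i−1})·(1−f_{i−2})`. -/
theorem throughput_of_shift_invariant (P M : ℕ) [NeZero P]
    (s : ℕ → ZMod P → ℝ) (f : ℕ → ℝ)
    (hbin : ∀ j k, s j k = 0 ∨ s j k = 1)
    (hzero : ∀ j, j ∉ Finset.Icc 1 M → (∀ k, s j k = 0))
    (hfzero : ∀ j, j ∉ Finset.Icc 1 M → f j = 0)
    (hduty : ∀ j, f j = (1 / (P : ℝ)) * ∑ k : ZMod P, s j k)
    (hSI : ∀ i ∈ Finset.Icc 1 M,
      ∀ A ⊆ Finset.Icc i (i + 2) ∩ Finset.Icc 1 M, A.Nonempty →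
        ∀ τ τ' : ℕ → ZMod P,
          ∑ k : ZMod P, ∏ j ∈ A, s j (k - τ j)
            = ∑ k : ZMod P, ∏ j ∈ A, s j (k - τ' j)) :
    ∀ i ∈ Finset.Icc 1 M, ∀ τ : ℕ → ZMod P,
      (∑ k : ZMod P,
          s i (k - τ i) * (1 - s (i + 1) (k - τ (i + 1))) * (1 - s (i + 2) (k - τ (i + 2)))
        = (P : ℝ) * f i * (1 - f (i + 1)) * (1 - f (i + 2))) ∧
      (∑ k : ZMod P,
          s i (k - τ i) * (1 - s (i - 1) (k - τ (i - 1))) * (1 - s (i - 2) (k - τ (i - 2)))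
        = (P : ℝ) * f i * (1 - f (i - 1)) * (1 - f (i - 2))) :=
  throughput_of_shift_invariant_general P M s f hzero hduty hSI
end

section
/- Fix integers d ≥ 1, M ≥ 1 and natural numbers n_1, …, n_M with n_i ≤ d for every i. Define binary sequences s_1, …, s_M of common period P = d³ as follows: for k ∈ ZMod d³, if i ≡ 1 (mod 3) then s_i(k) = 1 iff (k mod d) < n_i; if i ≡ 2 (mod 3) then s_i(k) = 1 iff (k mod d²) < d·n_i; if i ≡ 0 (mod 3) then s_i(k) = 1 iff (k mod d³) < d²·n_i (here 'k mod q', for q ∈ {d, d², d³} dividing d³, denotes the representative in {0,…,q−1} of the image of k in ZMod q). Then this family is consecutively 3-wise shift-invariant: for every i ∈ {1,…,M} and every nonempty subset A ⊆ {i, i+1, i+2} ∩ {1,…,M}, the generalized Hamming cross-correlation Σ_{k ∈ ZMod d³} Π_{j∈A} s_j(k−τ_j) is independent of the shifts (τ_j)_{j∈A} ∈ (ZMod d³)^A. -/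
/-!
Give sequence `j` the level `r ∈ {0, 1, 2}` determined by `j mod 3`. Whatever its shift, it is
periodic with period `d^(r+1)`, and along every progression `y, y + d^r, …, y + (d-1) d^r` it
takes the value `1` exactly `n_j` times. Averaging the correlation over translates by multiples
of `d^r`, where `r` is the largest level present, leaves the other (coarser) factors unchanged and
replaces the finest one by its mean `n_j / d`; by induction the correlation equals
`d³ ∏ n_j / d`, independently of the shifts.
-/

open Finset

theorem sum_mul_eq_mul_sum_of_sum_shifts {G : Type*} [AddCommGroup G] [Fintype G]
    {f g : G → ℝ} {t : G} {N : ℕ} {α : ℝ} (hN : N ≠ 0)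
    (hf : ∀ y, ∑ c ∈ range N, f (y + c • t) = N * α) (hg : Function.Periodic g t) :
    ∑ k, f k * g k = α * ∑ k, g k := by
  have key : (N : ℝ) * ∑ k, f k * g k = N * (α * ∑ k, g k) :=
    calc (N : ℝ) * ∑ k, f k * g k
        = ∑ c ∈ range N, ∑ k, f (k + c • t) * g (k + c • t) := by
          have hshift : ∀ c : ℕ, ∑ k, f (k + c • t) * g (k + c • t) = ∑ k, f k * g k :=
            fun c => Equiv.sum_comp (Equiv.addRight (c • t)) fun k => f k * g k
          simp only [hshift, sum_const, card_range, nsmul_eq_mul]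
      _ = ∑ k, g k * ∑ c ∈ range N, f (k + c • t) := by
          have hgc : ∀ (c : ℕ) k, g (k + c • t) = g k := fun c => hg.nsmul c
          rw [sum_comm]
          simp only [hgc, mul_sum, mul_comm]
      _ = N * (α * ∑ k, g k) := by
          simp only [hf, mul_sum]
          exact sum_congr rfl fun _ _ => by ring
  exact mul_left_cancel₀ (Nat.cast_ne_zero.mpr hN) key

theorem sum_prod_eq_card_mul_prod {G ι : Type*} [AddCommGroup G] [Fintype G]
    {t : ℕ → G} {N : ℕ} (hN : N ≠ 0) {A : Finset ι} {r : ι → ℕ} (hr : Set.InjOn r A)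
    {f : ι → G → ℝ} {α : ι → ℝ}
    (hper : ∀ j ∈ A, ∀ l, r j < l → Function.Periodic (f j) (t l))
    (havg : ∀ j ∈ A, ∀ y, ∑ c ∈ range N, f j (y + c • t (r j)) = N * α j) :
    ∑ k, ∏ j ∈ A, f j k = Fintype.card G * ∏ j ∈ A, α j := by
  classical
  induction A using Finset.induction_on_max_value r with
  | empty => simp
  | insert a s ha hmax ih =>
    have hlt : ∀ j ∈ s, r j < r a := fun j hj =>
      (hmax j hj).lt_of_ne fun h => ha (hr (mem_insert_of_mem hj) (mem_insert_self a s) h ▸ hj)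
    have hrest : Function.Periodic (∏ j ∈ s, f j) (t (r a)) :=
      s.periodic_prod fun j hj => hper j (mem_insert_of_mem hj) _ (hlt j hj)
    simp only [prod_insert ha]
    rw [sum_mul_eq_mul_sum_of_sum_shifts hN (havg a (mem_insert_self a s)) (by simpa using hrest),
      ih (hr.mono (by simp)) (fun j hj => hper j (mem_insert_of_mem hj))
        (fun j hj => havg j (mem_insert_of_mem hj))]
    ring

theorem ZMod.val_add_natCast_mod_of_dvd {P e : ℕ} [NeZero P] (he : e ∣ P) (x : ZMod P) (t : ℕ) :
    (x + t).val % e = (x.val + t) % e := by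
  rw [ZMod.val_add, ZMod.val_natCast, Nat.mod_mod_of_dvd _ he, Nat.add_mod,
    Nat.mod_mod_of_dvd _ he, ← Nat.add_mod]

theorem Nat.add_mul_lt_mul_iff_of_lt {a D w m : ℕ} (ha : a < D) : a + D * w < D * m ↔ w < m := by
  have hD : 0 < D := by omega
  rw [Nat.mul_comm D m, ← Nat.div_lt_iff_lt_mul hD, Nat.add_mul_div_left _ _ hD,
    Nat.div_eq_of_lt ha, zero_add]

theorem sum_range_ite_add_mod_lt (d w m : ℕ) (hm : m ≤ d) :
    ∑ c ∈ range d, (if (w + c) % d < m then (1 : ℝ) else 0) = m := by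
  rcases Nat.eq_zero_or_pos d with rfl | hd
  · simp_all
  have : NeZero d := ⟨hd.ne'⟩
  have hrot : ∑ c ∈ range d, (if (w + c) % d < m then (1 : ℝ) else 0)
      = ∑ c ∈ range d, (if c < m then (1 : ℝ) else 0) := by
    rw [← Fin.sum_univ_eq_sum_range (fun c => if (w + c) % d < m then (1 : ℝ) else 0),
      ← Fin.sum_univ_eq_sum_range (fun c => if c < m then (1 : ℝ) else 0)]
    refine Fintype.sum_equiv (Equiv.addLeft (Fin.ofNat d w)) _ _ fun c => ?_
    simp [Fin.val_add]
  have hfilter : (range d).filter (· < m) = range m := by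
    ext c
    simp only [mem_filter, mem_range]
    omega
  rw [hrot, sum_boole, hfilter, card_range]

-- `u(m, d)` with every entry repeated `D` times, read periodically on `ZMod P`.
noncomputable def blockIndicator (P D d m : ℕ) (k : ZMod P) : ℝ :=
  if k.val % (D * d) < D * m then 1 else 0

theorem blockIndicator_periodic {P D d : ℕ} [NeZero P] (m : ℕ) (hP : D * d ∣ P) {t : ℕ}
    (ht : D * d ∣ t) : Function.Periodic (blockIndicator P D d m) (t : ZMod P) := by
  intro k
  obtain ⟨u, rfl⟩ := ht
  rw [blockIndicator, blockIndicator, ZMod.val_add_natCast_mod_of_dvd hP, Nat.add_mul_mod_self_left]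

theorem sum_range_blockIndicator_add_nsmul {P D d m : ℕ} [NeZero P] (hP : D * d ∣ P) (hD : 0 < D)
    (hm : m ≤ d) (y : ZMod P) :
    ∑ c ∈ range d, blockIndicator P D d m (y + c • (D : ZMod P)) = m := by
  have hcond : ∀ c : ℕ,
      (y + c • (D : ZMod P)).val % (D * d) < D * m ↔ (y.val / D + c) % d < m := by
    intro c
    rw [nsmul_eq_mul, ← Nat.cast_mul, ZMod.val_add_natCast_mod_of_dvd hP, Nat.mod_mul,
      Nat.add_mul_mod_self_right, Nat.add_mul_div_right _ _ hD]
    exact Nat.add_mul_lt_mul_iff_of_lt (Nat.mod_lt _ hD)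
  simp only [blockIndicator, hcond]
  exact sum_range_ite_add_mod_lt d _ m hm

theorem sum_prod_blockIndicator_sub {ι : Type*} {d L : ℕ} [NeZero d] {A : Finset ι} {r : ι → ℕ}
    (hr : Set.InjOn r A) (hrL : ∀ j ∈ A, r j < L) {m : ι → ℕ} (hm : ∀ j ∈ A, m j ≤ d)
    (τ : ι → ZMod (d ^ L)) :
    ∑ k : ZMod (d ^ L), ∏ j ∈ A, blockIndicator (d ^ L) (d ^ r j) d (m j) (k - τ j)
      = d ^ L * ∏ j ∈ A, (m j / d : ℝ) := by
  have hdvd : ∀ j ∈ A, d ^ r j * d ∣ d ^ L := fun j hj => by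
    rw [← pow_succ]
    exact pow_dvd_pow d (hrL j hj)
  rw [sum_prod_eq_card_mul_prod (t := fun l => ((d ^ l : ℕ) : ZMod (d ^ L))) (NeZero.ne d) hr,
    ZMod.card, Nat.cast_pow]
  · intro j hj l hl
    refine (blockIndicator_periodic _ (hdvd j hj) ?_).sub_const (τ j)
    rw [← pow_succ]
    exact pow_dvd_pow d hl
  · intro j hj y
    simp_rw [add_sub_right_comm y]
    rw [sum_range_blockIndicator_add_nsmul (hdvd j hj) (pow_pos (Nat.pos_of_neZero d) _) (hm j hj)]
    field_simp [NeZero.ne d]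

theorem construction_consecutively_3wise_shift_invariant_general
    (d M : ℕ) (hd : 1 ≤ d) [NeZero (d ^ 3)]
    (n : ℕ → ℕ) (hn : ∀ i ∈ Finset.Icc 1 M, n i ≤ d)
    (s : ℕ → ZMod (d ^ 3) → ℝ)
    (hs : ∀ i ∈ Finset.Icc 1 M, ∀ k : ZMod (d ^ 3),
      s i k =
        if i % 3 = 1 then (if k.val % d < n i then 1 else 0)
        else if i % 3 = 2 then (if k.val % d ^ 2 < d * n i then 1 else 0)
        else (if k.val % d ^ 3 < d ^ 2 * n i then 1 else 0)) :
    ∀ i ∈ Finset.Icc 1 M,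
      ∀ A ⊆ Finset.Icc i (i + 2) ∩ Finset.Icc 1 M, A.Nonempty →
        ∀ τ τ' : ℕ → ZMod (d ^ 3),
          ∑ k : ZMod (d ^ 3), ∏ j ∈ A, s j (k - τ j)
            = ∑ k : ZMod (d ^ 3), ∏ j ∈ A, s j (k - τ' j) := by
  intro i _ A hA _ τ τ'
  have : NeZero d := ⟨by omega⟩
  have hmem : ∀ j ∈ A, j ∈ Icc i (i + 2) ∧ j ∈ Icc 1 M := fun j hj => mem_inter.mp (hA hj)
  have hlevel : ∀ j ∈ A, s j = blockIndicator (d ^ 3) (d ^ ((j + 2) % 3)) d (n j) := by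
    intro j hj
    funext k
    rw [hs j (hmem j hj).2 k, blockIndicator]
    obtain h | h | h : j % 3 = 0 ∨ j % 3 = 1 ∨ j % 3 = 2 := by omega
    all_goals simp [h, Nat.add_mod, pow_succ]
  have hinj : Set.InjOn (fun j => (j + 2) % 3) A := fun a ha b hb hab => by
    have ha' := mem_Icc.mp (hmem a ha).1
    have hb' := mem_Icc.mp (hmem b hb).1
    simp only at hab
    omega
  have hcorr : ∀ τ : ℕ → ZMod (d ^ 3),
      ∑ k : ZMod (d ^ 3), ∏ j ∈ A, s j (k - τ j) = d ^ 3 * ∏ j ∈ A, (n j / d : ℝ) := by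
    intro τ
    rw [← sum_prod_blockIndicator_sub hinj (fun j _ => Nat.mod_lt _ (by norm_num))
      (fun j hj => hn j (hmem j hj).2) τ]
    exact sum_congr rfl fun k _ => prod_congr rfl fun j hj => by rw [hlevel j hj]
  rw [hcorr, hcorr]

/-- **Proposition 1.** The protocol sequences of period `d³` constructed by concatenating
copies of the vector `u(n,q)` (with `n` ones followed by `q−n` zeros) at scale `d`, `d²`
or `d³` according to `i mod 3` are consecutively 3-wise shift-invariant. -/
theorem construction_consecutively_3wise_shift_invariant
    (d M : ℕ) (hd : 1 ≤ d) (hM : 1 ≤ M) [NeZero (d ^ 3)]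
    (n : ℕ → ℕ) (hn : ∀ i ∈ Finset.Icc 1 M, n i ≤ d)
    (s : ℕ → ZMod (d ^ 3) → ℝ)
    (hs : ∀ i ∈ Finset.Icc 1 M, ∀ k : ZMod (d ^ 3),
      s i k =
        if i % 3 = 1 then (if k.val % d < n i then 1 else 0)
        else if i % 3 = 2 then (if k.val % d ^ 2 < d * n i then 1 else 0)
        else (if k.val % d ^ 3 < d ^ 2 * n i then 1 else 0)) :
    ∀ i ∈ Finset.Icc 1 M,
      ∀ A ⊆ Finset.Icc i (i + 2) ∩ Finset.Icc 1 M, A.Nonempty →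
        ∀ τ τ' : ℕ → ZMod (d ^ 3),
          ∑ k : ZMod (d ^ 3), ∏ j ∈ A, s j (k - τ j)
            = ∑ k : ZMod (d ^ 3), ∏ j ∈ A, s j (k - τ' j) :=
  construction_consecutively_3wise_shift_invariant_general d M hd n hn s hs
end

section
/- For every integer d ≥ 1, all natural numbers n_2, n_3 with n_2, n_3 ≤ d, and all integers τ_2, τ_3: Σ_{k=0}^{d³−1} χ[((k−τ_2) mod d²) < d·n_2] · χ[((k−τ_3) mod d³) < d²·n_3] = d·n_2·n_3. In particular, this pairwise Hamming cross-correlation is independent of the shifts τ_2, τ_3. -/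
/-!
Both indicator sequences are periodic in `k` with period `d³` (as `d² ∣ d³`), so the sum over
one period may be shifted by `τ₃`. The second factor then becomes the indicator of `k < d²·n₃`,
a range made of `n₃` full periods of the first factor, each of which contains `d·n₂` ones.
-/

open Finset Function

namespace Function.Periodic

variable {M : Type*} [AddCommMonoid M] {f : ℤ → M} {q : ℕ}

theorem sum_range_comp_add_one (hf : Periodic f q) :
    ∑ k ∈ range q, f (k + 1) = ∑ k ∈ range q, f k := by
  cases q with
  | zero => simp
  | succ p =>
    have hwrap : f ((p : ℤ) + 1) = f 0 := by simpa using hf 0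
    rw [sum_range_succ, sum_range_succ']
    push_cast
    rw [hwrap]

theorem sum_range_comp_add (hf : Periodic f q) (c : ℤ) :
    ∑ k ∈ range q, f (k + c) = ∑ k ∈ range q, f k := by
  induction c using Int.induction_on with
  | zero => simp
  | succ i ih =>
    calc ∑ k ∈ range q, f (k + (i + 1))
        = ∑ k ∈ range q, f (k + 1 + i) := sum_congr rfl fun k _ ↦ congrArg f (by ring)
      _ = ∑ k ∈ range q, f (k + i) := (hf.add_const _).sum_range_comp_add_one
      _ = ∑ k ∈ range q, f k := ih
  | pred i ih =>
    calc ∑ k ∈ range q, f (k + (-i - 1))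
        = ∑ k ∈ range q, f (k + 1 + (-i - 1)) := (hf.add_const _).sum_range_comp_add_one.symm
      _ = ∑ k ∈ range q, f (k + -i) := sum_congr rfl fun k _ ↦ congrArg f (by ring)
      _ = ∑ k ∈ range q, f k := ih

theorem sum_range_mul (hf : Periodic f q) (a : ℕ) :
    ∑ k ∈ range (a * q), f k = a • ∑ k ∈ range q, f k := by
  induction a with
  | zero => simp
  | succ a ih =>
    rw [add_mul, one_mul, sum_range_add, ih, succ_nsmul]
    push_cast
    simp only [add_comm ((a : ℤ) * q), hf.nat_mul a _]

end Function.Periodic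

theorem periodic_comp_emod_sub {α : Type*} (p : ℤ → α) (q τ : ℤ) :
    Periodic (fun k ↦ p ((k - τ) % q)) q := by
  intro k
  simp only [add_sub_right_comm, Int.add_emod_right]

theorem sum_range_ite_emod_lt {M : Type*} [AddCommMonoid M] (f : ℤ → M) {q m : ℕ}
    (hm : m ≤ q) : ∑ k ∈ range q, (if (k : ℤ) % q < m then f k else 0) = ∑ k ∈ range m, f k := by
  rw [← sum_filter]
  congr 1
  ext k
  simp only [mem_filter, mem_range]
  constructor
  · rintro ⟨hk, hlt⟩
    rwa [Int.emod_eq_of_lt (by positivity) (by exact_mod_cast hk), Nat.cast_lt] at hlt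
  · intro hk
    have hkq : k < q := hk.trans_le hm
    rw [Int.emod_eq_of_lt (by positivity) (by exact_mod_cast hkq)]
    exact ⟨hkq, by exact_mod_cast hk⟩

theorem sum_range_ite_emod_sub_lt {R : Type*} [AddCommMonoidWithOne R] {q m : ℕ} (hm : m ≤ q)
    (τ : ℤ) : ∑ k ∈ range q, (if ((k : ℤ) - τ) % q < m then (1 : R) else 0) = m := by
  have hshift :=
    (periodic_comp_emod_sub (fun x ↦ if x < m then (1 : R) else 0) q τ).sum_range_comp_add τ
  simp only [add_sub_cancel_right] at hshift
  rw [← hshift]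
  exact (sum_range_ite_emod_lt (fun _ ↦ (1 : R)) hm).trans (by simp)

theorem pairwise_correlation_dsq_dcube_shift_invariant_general
    (d : ℕ) (n₂ n₃ : ℕ)
    (h₂ : n₂ ≤ d) (h₃ : n₃ ≤ d)
    (τ₂ τ₃ : ℤ) :
    ∑ k ∈ Finset.range (d ^ 3),
        (if ((k : ℤ) - τ₂) % ((d : ℤ) ^ 2) < (d : ℤ) * (n₂ : ℤ) then (1 : ℤ) else 0)
          * (if ((k : ℤ) - τ₃) % ((d : ℤ) ^ 3) < (d : ℤ) ^ 2 * (n₃ : ℤ) then 1 else 0)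
      = (d : ℤ) * n₂ * n₃ := by
  set A : ℤ → ℤ := fun k ↦ if (k - τ₂) % ((d : ℤ) ^ 2) < d * n₂ then 1 else 0
  set B : ℤ → ℤ := fun k ↦ if (k - τ₃) % ((d : ℤ) ^ 3) < d ^ 2 * n₃ then 1 else 0
  have hA : Periodic A ((d ^ 2 : ℕ) : ℤ) := by
    simpa using periodic_comp_emod_sub (fun x ↦ if x < (d : ℤ) * n₂ then (1 : ℤ) else 0) _ τ₂
  have hB : Periodic B ((d ^ 3 : ℕ) : ℤ) := by
    simpa using
      periodic_comp_emod_sub (fun x ↦ if x < (d : ℤ) ^ 2 * n₃ then (1 : ℤ) else 0) _ τ₃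
  have hAB : Periodic (A * B) ((d ^ 3 : ℕ) : ℤ) := by
    refine Periodic.mul ?_ hB
    simpa [pow_succ, mul_comm] using hA.nat_mul d
  have hn₂ : d * n₂ ≤ d ^ 2 := by rw [sq]; exact Nat.mul_le_mul_left d h₂
  have hn₃ : d ^ 2 * n₃ ≤ d ^ 3 := by rw [pow_succ]; exact Nat.mul_le_mul_left _ h₃
  calc ∑ k ∈ range (d ^ 3), A k * B k
      = ∑ k ∈ range (d ^ 3), A (k + τ₃) * B (k + τ₃) :=
        (hAB.sum_range_comp_add τ₃).symm
    _ = ∑ k ∈ range (d ^ 3),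
          if (k : ℤ) % (d ^ 3 : ℕ) < (d ^ 2 * n₃ : ℕ) then A (k + τ₃) else 0 := by
        simp only [B, add_sub_cancel_right, mul_ite, mul_one, mul_zero]
        push_cast
        rfl
    _ = ∑ k ∈ range (d ^ 2 * n₃), A (k + τ₃) :=
        sum_range_ite_emod_lt (q := d ^ 3) (m := d ^ 2 * n₃) (fun k ↦ A (k + τ₃)) hn₃
    _ = n₃ • ∑ k ∈ range (d ^ 2), A k := by
        rw [mul_comm, (hA.add_const τ₃).sum_range_mul, hA.sum_range_comp_add]
    _ = d * n₂ * n₃ := by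
        have hcount := sum_range_ite_emod_sub_lt (R := ℤ) (q := d ^ 2) (m := d * n₂) hn₂ τ₂
        push_cast at hcount
        simp only [A, hcount, nsmul_eq_mul]
        ring

/-- Pairwise case at scales `(d², d³)` underlying Proposition 1: the Hamming
cross-correlation over one period `d³` equals `d·n₂·n₃`, independently of the shifts. -/
theorem pairwise_correlation_dsq_dcube_shift_invariant
    (d : ℕ) (hd : 1 ≤ d) (n₂ n₃ : ℕ)
    (h₂ : n₂ ≤ d) (h₃ : n₃ ≤ d)
    (τ₂ τ₃ : ℤ) :
    ∑ k ∈ Finset.range (d ^ 3),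
        (if ((k : ℤ) - τ₂) % ((d : ℤ) ^ 2) < (d : ℤ) * (n₂ : ℤ) then (1 : ℤ) else 0)
          * (if ((k : ℤ) - τ₃) % ((d : ℤ) ^ 3) < (d : ℤ) ^ 2 * (n₃ : ℤ) then 1 else 0)
      = (d : ℤ) * n₂ * n₃ :=
  pairwise_correlation_dsq_dcube_shift_invariant_general d n₂ n₃ h₂ h₃ τ₂ τ₃
end

section
/- Let T > 0 be a real number, c ≥ 1 an integer, and let a_1, …, a_m ∈ ℝ be such that each interval [a_j, a_j + T) is contained in [0, c·T) and the intervals [a_1, a_1+T), …, [a_m, a_m+T) are pairwise disjoint. Define s : ℝ → ℝ by s(t) = 1 if (t mod (c·T)) ∈ ⋃_{j=1}^{m} [a_j, a_j + T) and s(t) = 0 otherwise. Then: (i) ∫_{0}^{c·T} s(t) dt = m·T, so the duty factor of s is f = m/c; and (ii) for every t₀ ∈ ℝ, Σ_{k=0}^{c−1} s(t₀ − k·T) = m = c·f. Equivalently, (1/c)·Σ_{k=0}^{c−1} s(t₀ − k·T) = (1/(c·T))·∫_{0}^{c·T} s(t) dt for every t₀. -/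
open scoped Classical

/-!
Write `s = 1_U ∘ (· mod cT)`, where `U ⊆ [0, cT)` is the disjoint union of the intervals
`[a_j, a_j + T)`. On one period the reduction is the identity, so the integral of `s` is the
Lebesgue measure `mT` of `U`. For the samples, `(t₀ - kT) mod cT ∈ [b, b + T)` holds exactly when
`k ≡ ⌊(t₀ - b) / T⌋ (mod c)`, i.e. for exactly one `k < c`; summing over the `m` intervals gives `m`.
-/

open MeasureTheory Set Function
open scoped Finset

lemma card_filter_range_intCast_modEq {c : ℕ} (hc : c ≠ 0) (z : ℤ) :
    #{k ∈ Finset.range c | ((k : ℕ) : ℤ) ≡ z [ZMOD c]} = 1 := by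
  have hc' : (0 : ℤ) < c := by omega
  have h₀ := Int.emod_nonneg z hc'.ne'
  have h₁ := Int.emod_lt_of_pos z hc'
  refine Finset.card_eq_one.2 ⟨(z % c).toNat, ?_⟩
  ext k
  rw [Finset.mem_filter, Finset.mem_range, Finset.mem_singleton, Int.ModEq]
  constructor
  · rintro ⟨hk, hkz⟩
    rw [Int.emod_eq_of_lt (by omega) (by omega)] at hkz
    omega
  · rintro rfl
    refine ⟨by omega, ?_⟩
    rw [Int.toNat_of_nonneg h₀, Int.emod_emod_of_dvd _ dvd_rfl]

lemma toIcoMod_mem_iff_exists_sub_zsmul_mem {α : Type*} [AddCommGroup α] [LinearOrder α]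
    [IsOrderedAddMonoid α] [Archimedean α] {p : α} (hp : 0 < p) {a : α} {S : Set α}
    (hS : S ⊆ Ico a (a + p)) (b : α) :
    toIcoMod hp a b ∈ S ↔ ∃ n : ℤ, b - n • p ∈ S :=
  ⟨fun h ↦ ⟨_, h⟩, fun ⟨_, hn⟩ ↦ by rwa [toIcoMod, toIcoDiv_eq_of_sub_zsmul_mem_Ico hp (hS hn)]⟩

section FloorRing

variable {α : Type*} [Field α] [LinearOrder α] [IsStrictOrderedRing α] [FloorRing α]

lemma sub_mul_floor_div_eq_toIcoMod {p : α} (hp : 0 < p) (t : α) :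
    t - p * ⌊t / p⌋ = toIcoMod hp 0 t := by
  rw [toIcoMod, toIcoDiv_eq_floor, sub_zero, zsmul_eq_mul, mul_comm]

lemma floor_div_eq_iff_sub_mul_mem_Ico {T : α} (hT : 0 < T) (y : α) (z : ℤ) :
    ⌊y / T⌋ = z ↔ y - z * T ∈ Ico 0 T := by
  rw [← sub_zero y, ← toIcoDiv_eq_floor hT, toIcoDiv_eq_iff, zsmul_eq_mul, zero_add, sub_zero]

lemma toIcoMod_sub_mul_mem_Ico_iff_modEq {T : α} {c : ℕ} (hcT : 0 < (c : α) * T) {b : α}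
    (hb : Ico b (b + T) ⊆ Ico 0 (c * T)) (t : α) (k : ℤ) :
    toIcoMod hcT 0 (t - k * T) ∈ Ico b (b + T) ↔ k ≡ ⌊(t - b) / T⌋ [ZMOD c] := by
  have hT : 0 < T := pos_of_mul_pos_right hcT c.cast_nonneg
  rw [toIcoMod_mem_iff_exists_sub_zsmul_mem hcT (by rwa [zero_add]), Int.modEq_iff_dvd]
  refine exists_congr fun n ↦ ?_
  rw [sub_eq_iff_eq_add', floor_div_eq_iff_sub_mul_mem_Ico hT, zsmul_eq_mul]
  push_cast
  simp only [mem_Ico]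
  constructor <;> rintro ⟨h₁, h₂⟩ <;> constructor <;> linarith

lemma card_filter_range_toIcoMod_sub_mul_mem_Ico {T : α} {c : ℕ} (hcT : 0 < (c : α) * T)
    {b : α} (hb : Ico b (b + T) ⊆ Ico 0 (c * T)) (t : α) :
    #{k ∈ Finset.range c | toIcoMod hcT 0 (t - (k : ℕ) * T) ∈ Ico b (b + T)} = 1 := by
  have hc : c ≠ 0 := by rintro rfl; simp at hcT
  convert card_filter_range_intCast_modEq hc ⌊(t - b) / T⌋ using 3 with k
  rw [← toIcoMod_sub_mul_mem_Ico_iff_modEq hcT hb t k, Int.cast_natCast]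

end FloorRing

lemma sum_indicator_iUnion_eq_sum_card {ι κ α M : Type*} [Fintype ι] [AddCommMonoidWithOne M]
    {I : ι → Set α} [∀ j a, Decidable (a ∈ I j)] (hI : Pairwise (Disjoint on I))
    (s : Finset κ) (x : κ → α) :
    ∑ k ∈ s, (⋃ j, I j).indicator (1 : α → M) (x k) = ∑ j, (#{k ∈ s | x k ∈ I j} : M) := by
  have hI' : ((Finset.univ : Finset ι) : Set ι).PairwiseDisjoint I := fun i _ j _ hij ↦ hI hij
  have hU : (⋃ j, I j) = ⋃ j ∈ Finset.univ, I j := by simp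
  simp_rw [hU, Finset.indicator_biUnion_apply _ _ hI']
  rw [Finset.sum_comm]
  simp [Set.indicator_apply, Finset.sum_boole]

lemma intervalIntegral_indicator_toIcoMod {p : ℝ} (hp : 0 < p) {U : Set ℝ}
    (hU : MeasurableSet U) (hUp : U ⊆ Ico 0 p) :
    ∫ t in 0..p, U.indicator 1 (toIcoMod hp 0 t) = volume.real U := by
  rw [intervalIntegral.integral_of_le hp.le, integral_Ioc_eq_integral_Ioo,
    ← integral_Ico_eq_integral_Ioo,
    setIntegral_congr_fun measurableSet_Ico fun t ht ↦ by
      rw [(toIcoMod_eq_self hp).2 (by rwa [zero_add])],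
    setIntegral_indicator hU, inter_eq_right.2 hUp]
  simp

/-- For a protocol signal `s` of period `c·T` whose support in one period is a disjoint
union of `m` semi-open intervals of length `T`: (i) the integral of `s` over one period
is `m·T`, so the duty factor is `f = m/c`; (ii) for every `t₀`, the sum of `s` over the
`c` evenly spaced sample times `t₀, t₀−T, …, t₀−(c−1)T` equals `m = c·f`; equivalently,
the discrete average of `s` over the sample times equals its duty factor. -/
theorem protocol_signal_discrete_average_eq_duty_factor
    (T : ℝ) (hT : 0 < T) (c : ℕ) (hc : 1 ≤ c) (m : ℕ) (a : Fin m → ℝ)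
    (hsub : ∀ j, Set.Ico (a j) (a j + T) ⊆ Set.Ico (0 : ℝ) ((c : ℝ) * T))
    (hdisj : ∀ j j', j ≠ j' →
      Disjoint (Set.Ico (a j) (a j + T)) (Set.Ico (a j') (a j' + T)))
    (s : ℝ → ℝ)
    (hs : ∀ t : ℝ,
      s t = if (t - ((c : ℝ) * T) * (⌊t / ((c : ℝ) * T)⌋ : ℤ))
              ∈ ⋃ j : Fin m, Set.Ico (a j) (a j + T) then 1 else 0) :
    (∫ t in (0 : ℝ)..((c : ℝ) * T), s t = (m : ℝ) * T) ∧
    (∀ t₀ : ℝ, ∑ k ∈ Finset.range c, s (t₀ - (k : ℝ) * T) = (m : ℝ)) ∧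
    (∀ t₀ : ℝ, (1 / (c : ℝ)) * ∑ k ∈ Finset.range c, s (t₀ - (k : ℝ) * T)
      = (1 / ((c : ℝ) * T)) * ∫ t in (0 : ℝ)..((c : ℝ) * T), s t) := by
  have hcT : 0 < (c : ℝ) * T := mul_pos (by exact_mod_cast hc) hT
  have s_eq : s = fun t ↦ (⋃ j, Ico (a j) (a j + T)).indicator 1 (toIcoMod hcT 0 t) := by
    funext t
    rw [hs, sub_mul_floor_div_eq_toIcoMod hcT, indicator_apply, Pi.one_apply]
  have integral_eq : ∫ t in (0 : ℝ)..((c : ℝ) * T), s t = (m : ℝ) * T := by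
    rw [s_eq, intervalIntegral_indicator_toIcoMod hcT
        (MeasurableSet.iUnion fun _ ↦ measurableSet_Ico) (iUnion_subset hsub),
      measureReal_iUnion_fintype hdisj (fun _ ↦ measurableSet_Ico) fun _ ↦ measure_Ico_lt_top.ne]
    simp [hT.le]
  have sum_eq (t₀ : ℝ) : ∑ k ∈ Finset.range c, s (t₀ - (k : ℝ) * T) = (m : ℝ) := by
    rw [s_eq, sum_indicator_iUnion_eq_sum_card hdisj, Finset.sum_congr rfl fun j _ ↦ by
      rw [card_filter_range_toIcoMod_sub_mul_mem_Ico hcT (hsub j)]]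
    simp
  refine ⟨integral_eq, sum_eq, fun t₀ ↦ ?_⟩
  rw [integral_eq, sum_eq]
  field_simp
end

section
/- Let s_1, s_2, s_3 be binary sequences of common period P such that for every nonempty subset A ⊆ {1,2,3} the generalized Hamming cross-correlation of (s_j)_{j∈A} is independent of the shifts. Fix shifts τ_1, τ_2, τ_3 ∈ ZMod P, and suppose τ_1', τ_3' ∈ ZMod P are such that for every k ∈ ZMod P with s_2(k−τ_2) = 0 one has s_1(k−τ_1') + s_3(k−τ_3') = s_1(k−τ_1) + s_3(k−τ_3) (i.e., the channel activity signal computed with shifts (τ_1', τ_3') coincides with the true channel activity signal). Then for every k ∈ ZMod P with s_2(k−τ_2) = 0 and s_1(k−τ_1) + s_3(k−τ_3) = 1, one has s_1(k−τ_1') = s_1(k−τ_1) and s_3(k−τ_3') = s_3(k−τ_3). In words: the sender of every successfully received (non-collided) packet is correctly identified by the sliding-window algorithm, regardless of the delay offsets. -/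
/-!
Write `w k = 1 - s 1 (k - τ₂)` for the indicator of the slots where the middle node is silent,
and `d`, `e` for the differences between the candidate and the true arrivals from the left and
the right neighbour. Expanding `∑ k, w k * d k * e k` gives signed pair and triple
correlations, which cancel because they do not depend on the shifts. On the other hand, at
a silent slot matching signals force `e = -d`, so that sum equals `-∑ k, w k * d k ^ 2`.
Hence `d` vanishes at every silent slot, and with it `e`.
-/

open Finset

def HasShiftInvariantCorrelations {ι G R : Type*} [AddGroup G] [Fintype G] [CommRing R]
    (s : ι → G → R) : Prop :=
  ∀ A : Finset ι, A.Nonempty → ∀ τ τ' : ι → G,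
    ∑ k, ∏ j ∈ A, s j (k - τ j) = ∑ k, ∏ j ∈ A, s j (k - τ' j)

section Correlation

variable {ι G R : Type*} [AddGroup G] [Fintype G] [CommRing R] [DecidableEq ι]

theorem HasShiftInvariantCorrelations.sum_mul_eq {s : ι → G → R}
    (hs : HasShiftInvariantCorrelations s) {i l : ι} (hil : i ≠ l) (x y x₀ y₀ : G) :
    ∑ k, s i (k - x) * s l (k - y) = ∑ k, s i (k - x₀) * s l (k - y₀) := by
  have := hs {i, l} (insert_nonempty _ _) (fun m => if m = i then x else y)
    (fun m => if m = i then x₀ else y₀)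
  simpa [prod_pair hil, hil.symm] using this

theorem HasShiftInvariantCorrelations.sum_mul_mul_eq {s : ι → G → R}
    (hs : HasShiftInvariantCorrelations s) {i j l : ι} (hij : i ≠ j) (hil : i ≠ l)
    (hjl : j ≠ l) (z x y x₀ y₀ : G) :
    ∑ k, s i (k - x) * s j (k - z) * s l (k - y)
      = ∑ k, s i (k - x₀) * s j (k - z) * s l (k - y₀) := by
  have := hs {i, j, l} (insert_nonempty _ _)
    (fun m => if m = i then x else if m = l then y else z)
    (fun m => if m = i then x₀ else if m = l then y₀ else z)
  simpa [prod_insert, hij, hil, hjl, hij.symm, hil.symm, hjl.symm, mul_assoc] using this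

theorem HasShiftInvariantCorrelations.sum_one_sub_mul_mul_eq {s : ι → G → R}
    (hs : HasShiftInvariantCorrelations s) {i j l : ι} (hij : i ≠ j) (hil : i ≠ l)
    (hjl : j ≠ l) (z x y x₀ y₀ : G) :
    ∑ k, (1 - s j (k - z)) * s i (k - x) * s l (k - y)
      = ∑ k, (1 - s j (k - z)) * s i (k - x₀) * s l (k - y₀) := by
  have hpair := hs.sum_mul_eq hil x y x₀ y₀
  have htriple := hs.sum_mul_mul_eq hij hil hjl z x y x₀ y₀
  simp only [sub_mul, one_mul, sum_sub_distrib]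
  rw [hpair]
  congr 1
  simpa only [mul_comm (s j _), mul_assoc] using htriple

end Correlation

theorem sum_mul_sub_mul_sub_eq_zero {G R : Type*} [AddGroup G] [Fintype G] [CommRing R]
    (w f g : G → R) (c : R) (hc : ∀ x y, ∑ k, w k * f (k - x) * g (k - y) = c)
    (x x' y y' : G) :
    ∑ k, w k * (f (k - x') - f (k - x)) * (g (k - y') - g (k - y)) = 0 := by
  simp only [mul_sub, sub_mul, sum_sub_distrib, hc]
  ring

theorem eq_zero_of_sum_mul_mul_eq_zero {ι R : Type*} [Fintype ι] [CommRing R] [LinearOrder R]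
    [IsStrictOrderedRing R] {w d e : ι → R} (hw : ∀ i, 0 ≤ w i)
    (hde : ∀ i, w i ≠ 0 → d i + e i = 0) (hsum : ∑ i, w i * d i * e i = 0)
    {i : ι} (hi : w i ≠ 0) : d i = 0 := by
  have hsq : ∀ i, w i * d i ^ 2 = -(w i * d i * e i) := by
    intro i
    by_cases h : w i = 0
    · simp [h]
    · rw [eq_neg_of_add_eq_zero_right (hde i h)]
      ring
  have hsum_sq : ∑ i, w i * d i ^ 2 = 0 := by
    simp only [hsq, sum_neg_distrib, hsum, neg_zero]
  have := (sum_eq_zero_iff_of_nonneg fun i _ => mul_nonneg (hw i) (sq_nonneg (d i))).mp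
    hsum_sq i (mem_univ i)
  exact pow_eq_zero_iff two_ne_zero |>.mp ((mul_eq_zero.mp this).resolve_left hi)

/-- **Identifiability.** Let `s 0, s 1, s 2` be the (binary, common period `P`) protocol
sequences of three consecutive nodes, whose generalized Hamming cross-correlations over
every nonempty subset are independent of the shifts. If candidate shifts `τ₁', τ₃'`
reproduce the true channel activity signal observed by the middle node (i.e., at every
slot where the middle node is silent the number of arriving packets matches), then at
every slot with exactly one successfully received packet, the sender is identified
correctly. -/
theorem identifiability_of_senders (P : ℕ) [NeZero P]
    (s : Fin 3 → ZMod P → ℝ)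
    (hbin : ∀ j k, s j k = 0 ∨ s j k = 1)
    (hSI : ∀ A : Finset (Fin 3), A.Nonempty →
      ∀ τ τ' : Fin 3 → ZMod P,
        ∑ k : ZMod P, ∏ j ∈ A, s j (k - τ j)
          = ∑ k : ZMod P, ∏ j ∈ A, s j (k - τ' j))
    (τ₁ τ₂ τ₃ τ₁' τ₃' : ZMod P)
    (hmatch : ∀ k : ZMod P, s 1 (k - τ₂) = 0 →
      s 0 (k - τ₁') + s 2 (k - τ₃') = s 0 (k - τ₁) + s 2 (k - τ₃)) :
    ∀ k : ZMod P, s 1 (k - τ₂) = 0 →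
      s 0 (k - τ₁) + s 2 (k - τ₃) = 1 →
        s 0 (k - τ₁') = s 0 (k - τ₁) ∧ s 2 (k - τ₃') = s 2 (k - τ₃) := by
  intro k hsilent _
  set w : ZMod P → ℝ := fun k => 1 - s 1 (k - τ₂)
  have hsilent_of_ne_zero : ∀ k, w k ≠ 0 → s 1 (k - τ₂) = 0 := fun k hk =>
    (hbin 1 (k - τ₂)).resolve_right fun h => hk (by simp [w, h])
  have hcancel := sum_mul_sub_mul_sub_eq_zero w (s 0) (s 2) _
    (fun x y => (HasShiftInvariantCorrelations.sum_one_sub_mul_mul_eq (s := s) hSI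
      (by decide) (by decide) (by decide) τ₂ x y τ₁ τ₃)) τ₁ τ₁' τ₃ τ₃'
  have hleft : s 0 (k - τ₁') - s 0 (k - τ₁) = 0 :=
    eq_zero_of_sum_mul_mul_eq_zero (w := w)
      (fun k => by rcases hbin 1 (k - τ₂) with h | h <;> simp [w, h])
      (fun k hk => by linarith [hmatch k (hsilent_of_ne_zero k hk)]) hcancel
      (by simp [w, hsilent])
  have := hmatch k hsilent
  constructor <;> linarith
end

section
/- Let s_1, s_2, s_3 be binary sequences of common period P with duty factors f_1, f_2, f_3, such that for every nonempty subset A ⊆ {1,2,3} the generalized Hamming cross-correlation of (s_j)_{j∈A} is independent of the shifts. Then for all shifts τ_1, τ_2, τ_3 ∈ ZMod P: Σ_{k ∈ ZMod P} s_1(k−τ_1)·s_3(k−τ_3)·(1 − s_2(k−τ_2)) = P·f_1·f_3·(1 − f_2). In words: the number of collision slots ('*' symbols) observed per period by the middle node is P·(1−f_2)·f_1·f_3, independently of the delay offsets. -/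
/-!
A shift-invariant correlation equals its average over all shifts, and summing
`∑ₖ ∏_{j ∈ A} sⱼ(k - τⱼ)` over all shift vectors `τ` factors into `P · ∏_{j ∈ A} ∑ₓ sⱼ(x)`
(times `P` for each unused coordinate of `τ`). Hence every correlation is `P · ∏_{j ∈ A} fⱼ`,
and the collision count is the pair correlation of `s₁, s₃` minus the triple correlation.
-/

open Finset

section ShiftAveraging

variable {G R ι : Type*} [Fintype G] [CommSemiring R] [Fintype ι] [DecidableEq ι]

theorem prod_sum_ite_mem (A : Finset ι) (g : ι → G → R) :
    ∏ j, ∑ x, (if j ∈ A then g j x else 1)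
      = Fintype.card G ^ (Fintype.card ι - #A) * ∏ j ∈ A, ∑ x, g j x := by
  have hsum (j : ι) : ∑ x, (if j ∈ A then g j x else 1)
      = if j ∈ A then ∑ x, g j x else Fintype.card G := by
    split_ifs <;> simp
  rw [Fintype.prod_congr _ _ hsum, prod_ite, prod_const, filter_notMem_eq_sdiff,
    ← compl_eq_univ_sdiff, card_compl, mul_comm]
  congr 2
  ext
  simp

variable [AddCommGroup G]

theorem sum_shifts_sum_prod_sub (g : ι → G → R) :
    ∑ τ : ι → G, ∑ k, ∏ j, g j (k - τ j) = Fintype.card G * ∏ j, ∑ x, g j x := by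
  calc ∑ τ : ι → G, ∑ k, ∏ j, g j (k - τ j)
      = ∑ k, ∏ j, ∑ t, g j (k - t) :=
        sum_comm.trans (sum_congr rfl fun k _ => (Fintype.prod_sum fun j t => g j (k - t)).symm)
    _ = ∑ _k : G, ∏ j, ∑ x, g j x :=
        sum_congr rfl fun k _ => prod_congr rfl fun j _ => (Equiv.subLeft k).sum_comp (g j)
    _ = Fintype.card G * ∏ j, ∑ x, g j x := by simp

theorem sum_shifts_sum_prod_sub_finset (A : Finset ι) (g : ι → G → R) :
    ∑ τ : ι → G, ∑ k, ∏ j ∈ A, g j (k - τ j)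
      = Fintype.card G ^ (Fintype.card ι - #A) * (Fintype.card G * ∏ j ∈ A, ∑ x, g j x) := by
  have hprod (k : G) (τ : ι → G) :
      ∏ j ∈ A, g j (k - τ j) = ∏ j, if j ∈ A then g j (k - τ j) else 1 :=
    (Fintype.prod_ite_mem A _).symm
  simp_rw [hprod]
  rw [sum_shifts_sum_prod_sub (fun j x => if j ∈ A then g j x else 1), prod_sum_ite_mem]
  ring

theorem card_pow_mul_sum_prod_sub_of_shift_invariant (A : Finset ι) (g : ι → G → R)
    (hg : ∀ τ τ' : ι → G, ∑ k, ∏ j ∈ A, g j (k - τ j) = ∑ k, ∏ j ∈ A, g j (k - τ' j))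
    (τ : ι → G) :
    Fintype.card G ^ Fintype.card ι * ∑ k, ∏ j ∈ A, g j (k - τ j)
      = Fintype.card G ^ (Fintype.card ι - #A) * (Fintype.card G * ∏ j ∈ A, ∑ x, g j x) := by
  rw [← sum_shifts_sum_prod_sub_finset, ← Nat.cast_pow, ← Fintype.card_fun, ← nsmul_eq_mul,
    ← card_univ, ← sum_const]
  exact sum_congr rfl fun τ' _ => hg τ τ'

end ShiftAveraging

theorem collision_count_shift_invariant_general (P : ℕ) [NeZero P]
    (s : Fin 3 → ZMod P → ℝ) (f₁ f₂ f₃ : ℝ)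
    (hf₁ : f₁ = (1 / (P : ℝ)) * ∑ k : ZMod P, s 0 k)
    (hf₂ : f₂ = (1 / (P : ℝ)) * ∑ k : ZMod P, s 1 k)
    (hf₃ : f₃ = (1 / (P : ℝ)) * ∑ k : ZMod P, s 2 k)
    (hSI : ∀ A : Finset (Fin 3), A.Nonempty →
      ∀ τ τ' : Fin 3 → ZMod P,
        ∑ k : ZMod P, ∏ j ∈ A, s j (k - τ j)
          = ∑ k : ZMod P, ∏ j ∈ A, s j (k - τ' j)) :
    ∀ τ₁ τ₂ τ₃ : ZMod P,
      ∑ k : ZMod P, s 0 (k - τ₁) * s 2 (k - τ₃) * (1 - s 1 (k - τ₂))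
        = (P : ℝ) * f₁ * f₃ * (1 - f₂) := by
  intro τ₁ τ₂ τ₃
  have hpair : (P : ℝ) ^ 3 * ∑ k : ZMod P, s 0 (k - τ₁) * s 2 (k - τ₃)
      = P * (P * ((∑ k, s 0 k) * ∑ k, s 2 k)) := by
    simpa [prod_pair (by decide : (0 : Fin 3) ≠ 2)] using
      card_pow_mul_sum_prod_sub_of_shift_invariant {0, 2} s (hSI _ (insert_nonempty _ _))
        ![τ₁, τ₂, τ₃]
  have htriple : (P : ℝ) ^ 3 * ∑ k : ZMod P, s 0 (k - τ₁) * s 1 (k - τ₂) * s 2 (k - τ₃)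
      = P * ((∑ k, s 0 k) * (∑ k, s 1 k) * ∑ k, s 2 k) := by
    simpa [Fin.prod_univ_three] using
      card_pow_mul_sum_prod_sub_of_shift_invariant univ s (hSI _ univ_nonempty) ![τ₁, τ₂, τ₃]
  have hsplit : ∑ k : ZMod P, s 0 (k - τ₁) * s 2 (k - τ₃) * (1 - s 1 (k - τ₂))
      = ∑ k : ZMod P, s 0 (k - τ₁) * s 2 (k - τ₃)
        - ∑ k : ZMod P, s 0 (k - τ₁) * s 1 (k - τ₂) * s 2 (k - τ₃) := by
    rw [← sum_sub_distrib]
    exact sum_congr rfl fun k _ => by ring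
  have hP : (P : ℝ) ≠ 0 := NeZero.ne _
  rw [hsplit, hf₁, hf₂, hf₃]
  field_simp
  apply mul_left_cancel₀ hP
  linear_combination hpair - htriple

/-- The number of collision slots (`*` symbols) observed per period by the middle node
of three consecutive nodes with shift-invariant binary protocol sequences is
`P·f₁·f₃·(1−f₂)`, independently of the delay offsets. -/
theorem collision_count_shift_invariant (P : ℕ) [NeZero P]
    (s : Fin 3 → ZMod P → ℝ) (f₁ f₂ f₃ : ℝ)
    (hbin : ∀ j k, s j k = 0 ∨ s j k = 1)
    (hf₁ : f₁ = (1 / (P : ℝ)) * ∑ k : ZMod P, s 0 k)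
    (hf₂ : f₂ = (1 / (P : ℝ)) * ∑ k : ZMod P, s 1 k)
    (hf₃ : f₃ = (1 / (P : ℝ)) * ∑ k : ZMod P, s 2 k)
    (hSI : ∀ A : Finset (Fin 3), A.Nonempty →
      ∀ τ τ' : Fin 3 → ZMod P,
        ∑ k : ZMod P, ∏ j ∈ A, s j (k - τ j)
          = ∑ k : ZMod P, ∏ j ∈ A, s j (k - τ' j)) :
    ∀ τ₁ τ₂ τ₃ : ZMod P,
      ∑ k : ZMod P, s 0 (k - τ₁) * s 2 (k - τ₃) * (1 - s 1 (k - τ₂))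
        = (P : ℝ) * f₁ * f₃ * (1 - f₂) :=
  collision_count_shift_invariant_general P s f₁ f₂ f₃ hf₁ hf₂ hf₃ hSI
end

section
/- For all real numbers f_1, f_2, f_3, f_4 ∈ [0, 1], min{ f_1(1−f_2)(1−f_3), f_2(1−f_3)(1−f_4), f_3(1−f_4), f_4(1−f_3)(1−f_2), f_3(1−f_2)(1−f_1), f_2(1−f_1) } ≤ 4/27; moreover, when f_1 = f_2 = f_3 = f_4 = 1/3 this minimum equals 4/27. Consequently, the maximal symmetric rate R_1 = R_2 in the capacity region of the four-node two-way tandem collision network is 4/27. -/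
/-!
Suppose `A = f₁(1-f₂)(1-f₃)`, `E = f₃(1-f₂)(1-f₁)`, `D = f₄(1-f₃)(1-f₂)` and
`B = f₂(1-f₃)(1-f₄)` all exceed `r = 4/27`. The end node's duty factor occurs as `f₁` in `A`
and as `1 - f₁` in `E`, so adding the resulting bounds on `f₁` and `1 - f₁` eliminates it, leaving
`r < (1-f₂)(1-f₃)f₃`; likewise `D` and `B` give `r < (1-f₃)(1-f₂)f₂`. Multiplying,
`r² < (1-f₂)²f₂ · (1-f₃)²f₃ ≤ r²`, because `(1-f)²f ≤ 4/27` on `[0, 1]`.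
-/

/-- `4/27 - (1 - f)² f = (f - 1/3)² (4/3 - f)`. -/
lemma sq_one_sub_mul_le_four_div_27 {f : ℝ} (hf : f ≤ 4 / 3) : (1 - f) ^ 2 * f ≤ 4 / 27 := by
  nlinarith [mul_nonneg (sq_nonneg (f - 1 / 3)) (sub_nonneg.2 hf)]

lemma lt_mul_mul_of_lt_mul_of_lt_one_sub_mul {r f x y z : ℝ} (hr : 0 ≤ r) (hx : 0 ≤ x)
    (hy : 0 ≤ y) (hz : 0 ≤ z) (hyz : y + z = 1)
    (h₁ : r < f * (x * y)) (h₂ : r < (1 - f) * (x * z)) : r < x * y * z := by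
  obtain rfl : z = 1 - y := by linarith
  have hxy : 0 < x * y :=
    (mul_nonneg hx hy).lt_of_ne fun h ↦ by rw [← h, mul_zero] at h₁; linarith
  have hxz : 0 < x * (1 - y) :=
    (mul_nonneg hx hz).lt_of_ne fun h ↦ by rw [← h, mul_zero] at h₂; linarith
  have hx' : 0 < x := pos_of_mul_pos_left hxy hy
  have hsum : r * x < x * (x * y * (1 - y)) := by
    linarith [mul_lt_mul_of_pos_right h₁ hxz, mul_lt_mul_of_pos_right h₂ hxy]
  exact lt_of_mul_lt_mul_left (by linarith) hx'.le

/-- The maximal symmetric rate in the capacity region of the four-node two-way tandem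
collision network is `4/27`: for all duty factors `f₁,…,f₄ ∈ [0,1]`, the minimum of the
six throughput constraints is at most `4/27`, and at `f₁ = f₂ = f₃ = f₄ = 1/3` it equals
`4/27`. -/
theorem max_symmetric_rate_two_way_tandem :
    (∀ f₁ f₂ f₃ f₄ : ℝ,
      f₁ ∈ Set.Icc (0 : ℝ) 1 → f₂ ∈ Set.Icc (0 : ℝ) 1 →
      f₃ ∈ Set.Icc (0 : ℝ) 1 → f₄ ∈ Set.Icc (0 : ℝ) 1 →
        min (f₁ * (1 - f₂) * (1 - f₃))
          (min (f₂ * (1 - f₃) * (1 - f₄))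
            (min (f₃ * (1 - f₄))
              (min (f₄ * (1 - f₃) * (1 - f₂))
                (min (f₃ * (1 - f₂) * (1 - f₁)) (f₂ * (1 - f₁))))))
          ≤ 4 / 27) ∧
    (min ((1/3 : ℝ) * (1 - 1/3) * (1 - 1/3))
        (min ((1/3 : ℝ) * (1 - 1/3) * (1 - 1/3))
          (min ((1/3 : ℝ) * (1 - 1/3))
            (min ((1/3 : ℝ) * (1 - 1/3) * (1 - 1/3))
              (min ((1/3 : ℝ) * (1 - 1/3) * (1 - 1/3)) ((1/3 : ℝ) * (1 - 1/3))))))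
      = 4 / 27) := by
  refine ⟨fun f₁ f₂ f₃ f₄ _ hf₂ hf₃ _ => ?_, by norm_num⟩
  by_contra! h
  simp only [lt_min_iff] at h
  obtain ⟨hA, hB, -, hD, hE, -⟩ := h
  have hx : 0 ≤ 1 - f₂ := sub_nonneg.2 hf₂.2
  have hy : 0 ≤ 1 - f₃ := sub_nonneg.2 hf₃.2
  have hf₁ : 4 / 27 < (1 - f₂) * (1 - f₃) * f₃ :=
    lt_mul_mul_of_lt_mul_of_lt_one_sub_mul (f := f₁) (by norm_num) hx hy hf₃.1 (by ring)
      (by linarith) (by linarith)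
  have hf₄ : 4 / 27 < (1 - f₃) * (1 - f₂) * f₂ :=
    lt_mul_mul_of_lt_mul_of_lt_one_sub_mul (f := f₄) (by norm_num) hy hx hf₂.1 (by ring)
      (by linarith) (by linarith)
  have hprod : 4 / 27 * (4 / 27) < 4 / 27 * (4 / 27 : ℝ) :=
    calc 4 / 27 * (4 / 27) < (1 - f₂) * (1 - f₃) * f₃ * ((1 - f₃) * (1 - f₂) * f₂) :=
          mul_lt_mul'' hf₁ hf₄ (by norm_num) (by norm_num)
      _ = (1 - f₂) ^ 2 * f₂ * ((1 - f₃) ^ 2 * f₃) := by ring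
      _ ≤ 4 / 27 * (4 / 27) :=
          mul_le_mul (sq_one_sub_mul_le_four_div_27 (by linarith [hf₂.2]))
            (sq_one_sub_mul_le_four_div_27 (by linarith [hf₃.2]))
            (mul_nonneg (sq_nonneg _) hf₃.1) (by norm_num)
  exact lt_irrefl _ hprod
end
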